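/- arXiv:1901.01203 — 8 statements merged into one kernel-verified Lean document; each statement's English description precedes it below -/
import Mathlib

section
/- The set of 6-tuples (n, r, r', d₁, d₂, c) of integers satisfying 1 ≤ r ≤ 3, r ≤ n − 2, 0 ≤ r' ≤ n − 2, d₁ ≥ 2, d₂ ≥ 2, c ≥ 0, d₁·(n − r − 1) = r' + 2, and d₂·(n − r' − 1) = r − c + 2, is exactly the following set of 26 tuples: (3,1,1,3,2,1), (3,1,1,3,3,0), (4,1,2,2,2,1), (4,1,2,2,3,0), (4,2,1,3,2,0), (4,2,2,4,2,2), (4,2,2,4,3,1), (4,2,2,4,4,0), (5,2,2,2,2,0), (6,2,4,2,2,2), (6,2,4,2,3,1), (6,2,4,2,4,0), (5,3,2,4,2,1), (5,3,3,5,2,3), (5,3,3,5,3,2), (5,3,3,5,4,1), (5,3,3,5,5,0), (6,3,4,3,2,3), (6,3,4,3,3,2), (6,3,4,3,4,1), (6,3,4,3,5,0), (7,3,4,2,2,1), (8,3,6,2,2,3), (8,3,6,2,3,2), (8,3,6,2,4,1), (8,3,6,2,5,0). -/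
/-!
Put `a = n - r - 1` and `b = n - r' - 1`. Since `d₂ ≥ 2` and `c ≥ 0`, the second equation gives
`2 b ≤ r + 2 ≤ 5`, so `b ∈ {1, 2}`; since `d₁ ≥ 2`, the first gives `2 a ≤ r' + 2 = n + 1 - b ≤ n`,
so `n ≤ 2 r + 2 ≤ 8`. Thus `n`, `r`, `r'` and `d₂` range over a small box, the two equations
determine `d₁` and `c`, and the surviving cases are exactly the table.
-/

lemma classification_bounds {n r r' d₁ d₂ c : ℤ} (hr : r ≤ 3) (hrn : r ≤ n - 2)
    (hr'n : r' ≤ n - 2) (hd₁ : 2 ≤ d₁) (hd₂ : 2 ≤ d₂) (hc : 0 ≤ c)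
    (h₁ : d₁ * (n - r - 1) = r' + 2) (h₂ : d₂ * (n - r' - 1) = r - c + 2) :
    n ≤ 8 ∧ n - r' ≤ 3 ∧ d₂ ≤ 5 := by
  have ha : 2 * (n - r - 1) ≤ r' + 2 := h₁ ▸ mul_le_mul_of_nonneg_right hd₁ (by omega)
  have hb : 2 * (n - r' - 1) ≤ r - c + 2 := h₂ ▸ mul_le_mul_of_nonneg_right hd₂ (by omega)
  have hd₂b : d₂ ≤ d₂ * (n - r' - 1) := le_mul_of_one_le_right (by omega) (by omega)
  omega

/-- Corollary 1.3 / Table 1: the preliminary classification of the numerical data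
`(n, r, r', d₁, d₂, c)` of special birational transformations of type `(d₁, d₂)`, `d₂ > 1`,
into a factorial variety, with base locus of dimension `r ≤ 3`. -/
theorem preliminary_classification (n r r' d₁ d₂ c : ℤ) :
    (1 ≤ r ∧ r ≤ 3 ∧ r ≤ n - 2 ∧ 0 ≤ r' ∧ r' ≤ n - 2 ∧ 2 ≤ d₁ ∧ 2 ≤ d₂ ∧ 0 ≤ c ∧
      d₁ * (n - r - 1) = r' + 2 ∧ d₂ * (n - r' - 1) = r - c + 2)
    ↔ (n, r, r', d₁, d₂, c) ∈
      ({(3,1,1,3,2,1), (3,1,1,3,3,0), (4,1,2,2,2,1), (4,1,2,2,3,0), (4,2,1,3,2,0),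
        (4,2,2,4,2,2), (4,2,2,4,3,1), (4,2,2,4,4,0), (5,2,2,2,2,0), (6,2,4,2,2,2),
        (6,2,4,2,3,1), (6,2,4,2,4,0), (5,3,2,4,2,1), (5,3,3,5,2,3), (5,3,3,5,3,2),
        (5,3,3,5,4,1), (5,3,3,5,5,0), (6,3,4,3,2,3), (6,3,4,3,3,2), (6,3,4,3,4,1),
        (6,3,4,3,5,0), (7,3,4,2,2,1), (8,3,6,2,2,3), (8,3,6,2,3,2), (8,3,6,2,4,1),
        (8,3,6,2,5,0)} : Set (ℤ × ℤ × ℤ × ℤ × ℤ × ℤ)) := by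
  simp only [Set.mem_insert_iff, Set.mem_singleton_iff, Prod.mk.injEq]
  constructor
  · rintro ⟨hr1, hr3, hrn, hr'0, hr'n, hd₁, hd₂, hc, h₁, h₂⟩
    obtain ⟨hn8, hr', hd₂5⟩ := classification_bounds hr3 hrn hr'n hd₁ hd₂ hc h₁ h₂
    have hn3 : 3 ≤ n := by omega
    obtain rfl | rfl : r' = n - 2 ∨ r' = n - 3 := by omega
    all_goals
      interval_cases r <;> interval_cases n <;> interval_cases d₂ <;> norm_num <;> omega
  · intro h
    casesm* _ ∨ _, _ ∧ _ <;> subst_vars <;> norm_num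
end

section
/- The set Γ₁₇₄ has exactly 174 elements; moreover every (λ, g, Δ, d, a) ∈ Γ₁₇₄ satisfies 7 ≤ λ ≤ 18 and 0 ≤ g ≤ 28, and its component (Δ, d, a) lies in {(1,5,0), (4,2,1), (3,3,1), (2,4,1), (6,2,2), (4,3,2), (8,2,3)}. -/
/-- The admissibility predicate from Lemma 2.2 of the paper. -/
def Admissible (l g D d a : ℤ) : Prop :=
  3 ≤ l ∧ l ≤ 27 ∧ 0 ≤ g ∧
  2 * g ≤ ((l - 2) / 3) * (2 * l - 8 - 3 * ((l - 2) / 3 - 1)) ∧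
  1 ≤ d ∧ d ≤ 5 ∧ 1 ≤ D ∧ 0 ≤ a ∧
  (d = 5 ↔ D = 1) ∧ (d = 4 ↔ D = 2) ∧
  (D = 1 → a = 0) ∧ (D = 2 → a = 1) ∧ (3 ≤ D → 1 ≤ a) ∧
  0 ≤ 2 * l - g + 1 ∧
  0 ≤ -21 * l + 6 * g - D * d + 237 ∧
  0 ≤ l ^ 2 + 9 * l - 18 * g + 18 ∧
  0 ≤ 49 * l ^ 2 - 28 * l * g + 4 * g ^ 2 + (D * d - 1106) * l + 316 * g - 27 * (D * d) + 6241 ∧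
  0 ≤ 7 * D * l - 2 * D * g + D ^ 2 * d ^ 2 - 79 * D ∧
  0 ≤ l ^ 2 + 7 * l - 10 * g - 2 * (D * d) + 12 * a - 12 * (if d = 1 then (1 : ℤ) else 0) - 92 ∧
  0 ≤ -10 * l + 8 * g + 2 * (D * d) - 12 * a + 12 * (if d = 1 then (1 : ℤ) else 0) + 94 ∧
  0 ≤ -290 * l + 140 * g - 13 * (D * d) + D + 2290 ∧
  0 ≤ -147 * l + 74 * g + 12 * (D * d) - D - 84 * a + 108 * (if d = 1 then (1 : ℤ) else 0) + 1183

/-- `CIFactor D s a` : there exist integers `e₁, …, e_a`, all `≥ 2`, with product `D` and sum `s`. -/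
def CIFactor (D s a : ℤ) : Prop :=
  ∃ e : List ℤ, (e.length : ℤ) = a ∧ (∀ x ∈ e, 2 ≤ x) ∧ e.prod = D ∧ e.sum = s

/-- The set Γ₁₇₄ from the proof of Theorem 2.3 of the paper. -/
def Gamma174 (l g D d a : ℤ) : Prop :=
  Admissible l g D d a ∧ d ≠ 1 ∧ CIFactor D (a + 5 - d) a

/-!
As `d ≥ 2` and every `eᵢ ≥ 2`, the factorization condition `∑ (eᵢ - 1) = 5 - d ≤ 3` leaves
only the lists `[]`, `[2]`, `[3]`, `[4]`, `[2, 2]`, `[2, 3]`, `[3, 2]`, `[2, 2, 2]`, i.e. seven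
triples `(Δ, d, a)`. Admissibility bounds `λ ≤ 27` and `g ≤ 2λ + 1`, so what remains is a finite
check over a box, carried out by kernel evaluation.
-/

instance (l g D d a : ℤ) : Decidable (Admissible l g D d a) := by
  unfold Admissible; infer_instance

def ciTriples : Finset (ℤ × ℤ × ℤ) :=
  {(1, 5, 0), (4, 2, 1), (3, 3, 1), (2, 4, 1), (6, 2, 2), (4, 3, 2), (8, 2, 3)}

theorem mem_ciTriples_of_ciFactor {D d a : ℤ} (hd : 2 ≤ d) (h : CIFactor D (a + 5 - d) a) :
    (D, d, a) ∈ ciTriples := by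
  obtain ⟨e, rfl, he, rfl, hsum⟩ := h
  have hlen : e.length • (2 : ℤ) ≤ e.sum := List.card_nsmul_le_sum e 2 he
  obtain rfl : d = e.length + 5 - e.sum := by omega
  clear hsum
  rw [nsmul_eq_mul] at hlen
  rcases e with _ | ⟨x, _ | ⟨y, _ | ⟨z, _ | ⟨w, t⟩⟩⟩⟩ <;>
    simp only [List.mem_cons, List.not_mem_nil, or_false, forall_eq_or_imp, forall_eq,
      List.length_cons, List.length_nil, List.sum_cons, List.sum_nil, List.prod_cons,
      List.prod_nil, add_zero, mul_one] at he hd hlen ⊢ <;> push_cast at hd hlen ⊢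
  · decide
  · have : x ≤ 4 := by omega
    interval_cases x <;> decide
  · obtain ⟨hx, hy⟩ := he
    have : x ≤ 3 := by omega
    have : y ≤ 3 := by omega
    interval_cases x <;> interval_cases y <;> first | decide | omega
  · obtain ⟨hx, hy, hz⟩ := he
    obtain ⟨rfl, rfl, rfl⟩ : x = 2 ∧ y = 2 ∧ z = 2 := by omega
    decide
  · omega

theorem ciFactor_of_mem_ciTriples {D d a : ℤ} (h : (D, d, a) ∈ ciTriples) :
    CIFactor D (a + 5 - d) a := by
  simp only [ciTriples, Finset.mem_insert, Finset.mem_singleton, Prod.mk.injEq] at h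
  rcases h with ⟨rfl, rfl, rfl⟩ | ⟨rfl, rfl, rfl⟩ | ⟨rfl, rfl, rfl⟩ | ⟨rfl, rfl, rfl⟩ |
    ⟨rfl, rfl, rfl⟩ | ⟨rfl, rfl, rfl⟩ | ⟨rfl, rfl, rfl⟩
  exacts [⟨[], by decide⟩, ⟨[4], by decide⟩, ⟨[3], by decide⟩, ⟨[2], by decide⟩,
    ⟨[2, 3], by decide⟩, ⟨[2, 2], by decide⟩, ⟨[2, 2, 2], by decide⟩]

theorem ciFactor_iff_mem_ciTriples {D d a : ℤ} (hd : 2 ≤ d) :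
    CIFactor D (a + 5 - d) a ↔ (D, d, a) ∈ ciTriples :=
  ⟨mem_ciTriples_of_ciFactor hd, ciFactor_of_mem_ciTriples⟩

theorem two_le_of_mem_ciTriples {D d a : ℤ} (h : (D, d, a) ∈ ciTriples) : 2 ≤ d :=
  (by decide : ∀ t ∈ ciTriples, 2 ≤ t.2.1) _ h

theorem Admissible.bounds_of_mem_ciTriples {l g D d a : ℤ} (h : Admissible l g D d a)
    (ht : (D, d, a) ∈ ciTriples) : 7 ≤ l ∧ l ≤ 18 ∧ g ≤ 28 := by
  have hbox : ∀ l ∈ Finset.Icc (3 : ℤ) 27, ∀ g ∈ Finset.Icc (0 : ℤ) 55, ∀ t ∈ ciTriples,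
      Admissible l g t.1 t.2.1 t.2.2 → 7 ≤ l ∧ l ≤ 18 ∧ g ≤ 28 := by
    decide
  refine hbox l ?_ g ?_ _ ht h <;>
    obtain ⟨hl3, hl27, hg0, -, -, -, -, -, -, -, -, -, -, hg, -⟩ := h <;>
    rw [Finset.mem_Icc] <;> omega

noncomputable def gamma174Finset : Finset (ℤ × ℤ × ℤ × ℤ × ℤ) :=
  (Finset.Icc 7 18 ×ˢ Finset.Icc 0 28 ×ˢ ciTriples).filter
    fun p => Admissible p.1 p.2.1 p.2.2.1 p.2.2.2.1 p.2.2.2.2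

set_option maxRecDepth 10000 in
theorem card_gamma174Finset : gamma174Finset.card = 174 := by decide

theorem gamma174_iff_mem {l g D d a : ℤ} :
    Gamma174 l g D d a ↔ (l, g, D, d, a) ∈ gamma174Finset := by
  simp only [gamma174Finset, Finset.mem_filter, Finset.mem_product, Finset.mem_Icc]
  constructor
  · rintro ⟨ha, hd1, hc⟩
    have hd : 2 ≤ d := by
      obtain ⟨-, -, -, -, hd, -⟩ := ha
      omega
    have ht := (ciFactor_iff_mem_ciTriples hd).1 hc
    obtain ⟨hl7, hl18, hg28⟩ := ha.bounds_of_mem_ciTriples ht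
    exact ⟨⟨⟨hl7, hl18⟩, ⟨ha.2.2.1, hg28⟩, ht⟩, ha⟩
  · rintro ⟨⟨-, -, ht⟩, ha⟩
    have hd := two_le_of_mem_ciTriples ht
    exact ⟨ha, by omega, (ciFactor_iff_mem_ciTriples hd).2 ht⟩

/-- The first enumeration in the proof of Theorem 2.3: Γ₁₇₄ has exactly 174 elements,
with `7 ≤ λ ≤ 18`, `0 ≤ g ≤ 28`, and `(Δ, d, a)` among seven possibilities. -/
theorem gamma174_count :
    ({p : ℤ × ℤ × ℤ × ℤ × ℤ |
        Gamma174 p.1 p.2.1 p.2.2.1 p.2.2.2.1 p.2.2.2.2}).Finite ∧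
    ({p : ℤ × ℤ × ℤ × ℤ × ℤ |
        Gamma174 p.1 p.2.1 p.2.2.1 p.2.2.2.1 p.2.2.2.2}).ncard = 174 ∧
    (∀ l g D d a : ℤ, Gamma174 l g D d a →
      7 ≤ l ∧ l ≤ 18 ∧ 0 ≤ g ∧ g ≤ 28 ∧
      (D, d, a) ∈ ({(1,5,0), (4,2,1), (3,3,1), (2,4,1), (6,2,2), (4,3,2), (8,2,3)} :
        Set (ℤ × ℤ × ℤ))) := by
  have hset : {p : ℤ × ℤ × ℤ × ℤ × ℤ | Gamma174 p.1 p.2.1 p.2.2.1 p.2.2.2.1 p.2.2.2.2} =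
      gamma174Finset := Set.ext fun _ => gamma174_iff_mem
  refine ⟨hset ▸ gamma174Finset.finite_toSet, ?_, fun l g D d a h => ?_⟩
  · rw [hset, Set.ncard_coe_finset, card_gamma174Finset]
  · have hmem := gamma174_iff_mem.1 h
    simp only [gamma174Finset, Finset.mem_filter, Finset.mem_product, Finset.mem_Icc] at hmem
    obtain ⟨⟨⟨hl7, hl18⟩, ⟨hg0, hg28⟩, ht⟩, -⟩ := hmem
    exact ⟨hl7, hl18, hg0, hg28, by simpa [ciTriples] using ht⟩
end

section
/- No tuple (λ, g, Δ, d, a) ∈ Γ₁₇₄ satisfies both equations K3 + 9·K2H + 27·KH2 + 27λ = 0 and K2H + 6·KH2 + 9λ = 0. -/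
/-- `K_B · H_B²` for the base locus, from Lemma 2.1. -/
def KH2 (l g : ℤ) : ℤ := -2 * l + 2 * g - 2

/-- `K_B² · H_B` for the base locus, from Lemma 2.1. -/
def K2H (l g D d a : ℤ) : ℤ := -39 * l + 14 * g + D * d - 12 * a + 331

/-- `K_B³` for the base locus, from Lemma 2.1. -/
def K3 (l g D d a : ℤ) : ℤ := l ^ 2 - 77 * l + 14 * g - 3 * (D * d) - D - 12 * a + 688

/-!
The second equation reads `Δ·d = 42λ − 26g + 12a − 319`, so `Δ·d` is odd. With `d ≠ 1` this leaves
`d = 5`, forcing `(Δ, a) = (1, 0)`, or `d = 3`, where the factors `e₁, …, e_a ≥ 2` sum to `a + 2`, so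
they are `(3)` or `(2, 2)` and oddness forces `(Δ, a) = (3, 1)`. In either case the second equation
expresses `13g` linearly in `λ`, and eliminating `g` from the first leaves a quadratic
`13λ² − 1841λ + c = 0` with no root modulo `11` (for `d = 5`) or modulo `7` (for `d = 3`).
-/

theorem Int.quadratic_ne_zero_of_forall_zmod (p : ℕ) (A B C : ℤ)
    (hp : ∀ x : ZMod p, (A : ZMod p) * x ^ 2 + B * x + C ≠ 0) (l : ℤ) :
    A * l ^ 2 + B * l + C ≠ 0 := fun h =>
  hp l (by exact_mod_cast congrArg (Int.cast : ℤ → ZMod p) h)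

theorem List.eq_three_or_eq_two_two_of_sum_eq_length_add_two {e : List ℤ}
    (he : ∀ x ∈ e, 2 ≤ x) (hsum : e.sum = e.length + 2) : e = [3] ∨ e = [2, 2] := by
  have hlen : e.length ≤ 2 := by
    have h2 := e.card_nsmul_le_sum 2 he
    rw [nsmul_eq_mul, hsum] at h2
    omega
  match e, he, hlen with
  | [], _, _ => simp at hsum
  | [x], _, _ => simp_all
  | [x, y], he, _ =>
    have := he x (by simp)
    have := he y (by simp)
    simp only [List.sum_cons, List.sum_nil, List.length_cons, List.length_nil] at hsum
    right
    congr <;> omega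
  | _ :: _ :: _ :: _, _, hlen => simp at hlen

theorem CIFactor.eq_three_of_odd {D a : ℤ} (h : CIFactor D (a + 2) a) (hD : Odd D) :
    D = 3 ∧ a = 1 := by
  obtain ⟨e, rfl, he, rfl, hsum⟩ := h
  rcases List.eq_three_or_eq_two_two_of_sum_eq_length_add_two he hsum with rfl | rfl
  · simp
  · exact absurd hD (by decide)

def ScrollEquations (l g D d a : ℤ) : Prop :=
  K3 l g D d a + 9 * K2H l g D d a + 27 * KH2 l g + 27 * l = 0 ∧
    K2H l g D d a + 6 * KH2 l g + 9 * l = 0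

namespace ScrollEquations

variable {l g D d a : ℤ}

theorem mul_eq (h : ScrollEquations l g D d a) : D * d = 42 * l - 26 * g + 12 * a - 319 := by
  unfold ScrollEquations K3 K2H KH2 at h
  linarith [h.2]

theorem quadratic_eq (h : ScrollEquations l g D d a) :
    l ^ 2 - 455 * l + 194 * g + 6 * (D * d) - D - 120 * a + 3613 = 0 := by
  unfold ScrollEquations K3 K2H KH2 at h
  linear_combination h.1

theorem odd_mul (h : ScrollEquations l g D d a) : Odd (D * d) :=
  ⟨21 * l - 13 * g + 6 * a - 160, by rw [h.mul_eq]; ring⟩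

theorem not_one_five_zero : ¬ ScrollEquations l g 1 5 0 := fun h => by
  have hlin := h.mul_eq
  have hquad := h.quadratic_eq
  refine Int.quadratic_ne_zero_of_forall_zmod 11 13 (-1841) 15918 (by decide) l ?_
  linear_combination 13 * hquad - 97 * hlin

theorem not_three_three_one : ¬ ScrollEquations l g 3 3 1 := fun h => by
  have hlin := h.mul_eq
  have hquad := h.quadratic_eq
  refine Int.quadratic_ne_zero_of_forall_zmod 7 13 (-1841) 15420 (by decide) l ?_
  linear_combination 13 * hquad - 97 * hlin

end ScrollEquations

/-- Exclusion of scrolls over a curve in the proof of Theorem 2.3: no tuple of Γ₁₇₄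
satisfies `(K_B + 3H_B)³ = 0` and `(K_B + 3H_B)² · H_B = 0`. -/
theorem no_scroll_over_curve (l g D d a : ℤ) (h : Gamma174 l g D d a) :
    ¬ (K3 l g D d a + 9 * K2H l g D d a + 27 * KH2 l g + 27 * l = 0 ∧
       K2H l g D d a + 6 * KH2 l g + 9 * l = 0) := by
  obtain ⟨⟨-, -, -, -, hd1, hd5, -, -, hd5D, -, hD1a, -⟩, hdne, hci⟩ := h
  intro hs
  change ScrollEquations l g D d a at hs
  obtain ⟨hDodd, hdodd⟩ := Int.odd_mul.mp hs.odd_mul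
  obtain rfl | rfl : d = 3 ∨ d = 5 := by
    obtain ⟨k, rfl⟩ := hdodd
    omega
  · rw [show a + 5 - 3 = a + 2 by ring] at hci
    obtain ⟨rfl, rfl⟩ := hci.eq_three_of_odd hDodd
    exact hs.not_three_three_one
  · obtain rfl := hd5D.mp rfl
    obtain rfl := hD1a rfl
    exact hs.not_one_five_zero
end

section
/- No tuple (λ, g, Δ, d, a) ∈ Γ₁₇₄ satisfies the system of three equations KH2 + 2λ = 0, K2H + 2·KH2 = 0, K3 + 2·K2H = 0; and no tuple in Γ₁₇₄ satisfies the system of two equations K3 + 6·K2H + 12·KH2 + 8λ = 0 and K2H + 4·KH2 + 4λ = 0. -/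
/-! The complete-intersection condition leaves only seven triples `(Δ, d, a)`. The del Pezzo
equations force `g = 1` and `43λ = Δd - 12a + 345`, which none of them satisfies. Eliminating `g`
from the quadric fibration equations leaves `11λ² - 974λ - 28Δd - 11Δ - 192a + 9447 = 0`, which
has no root `3 ≤ λ ≤ 27` for any of the seven triples. -/

-- The `eᵢ - 1 ≥ 1` form a partition of `k`.
theorem CIFactor.cases_of_le_three {D k a : ℤ} (h : CIFactor D (a + k) a) (hk : k ≤ 3) :
    (k = 0 ∧ D = 1 ∧ a = 0) ∨ (k = 1 ∧ D = 2 ∧ a = 1) ∨ (k = 2 ∧ D = 3 ∧ a = 1) ∨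
      (k = 2 ∧ D = 4 ∧ a = 2) ∨ (k = 3 ∧ D = 4 ∧ a = 1) ∨ (k = 3 ∧ D = 6 ∧ a = 2) ∨
      (k = 3 ∧ D = 8 ∧ a = 3) := by
  obtain ⟨e, rfl, he, rfl, hsum⟩ := h
  have hlen : e.length • (2 : ℤ) ≤ e.sum := List.card_nsmul_le_sum e 2 he
  rw [hsum, nsmul_eq_mul] at hlen
  rcases e with _ | ⟨x, _ | ⟨y, _ | ⟨z, _ | ⟨w, t⟩⟩⟩⟩ <;>
    simp only [List.forall_mem_cons, List.sum_cons, List.sum_nil, List.prod_cons, List.prod_nil,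
      List.length_cons, List.length_nil, Nat.cast_add, Nat.cast_one, Nat.cast_zero, zero_add,
      add_zero, mul_one, and_true] at he hsum hlen ⊢
  · omega
  · omega
  · obtain ⟨hx, hy, -⟩ := he
    have hx3 : x ≤ 3 := by omega
    have hy3 : y ≤ 3 := by omega
    interval_cases x <;> interval_cases y <;> omega
  · obtain ⟨rfl, rfl, rfl⟩ : x = 2 ∧ y = 2 ∧ z = 2 := by omega
    omega
  · omega

section

variable {l g D d a : ℤ}

theorem forty_three_mul_eq_of_delPezzo (h₁ : KH2 l g + 2 * l = 0)
    (h₂ : K2H l g D d a + 2 * KH2 l g = 0) : 43 * l = D * d - 12 * a + 345 := by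
  unfold KH2 K2H at *
  omega

theorem quadratic_eq_of_quadric_fibration
    (h₁ : K3 l g D d a + 6 * K2H l g D d a + 12 * KH2 l g + 8 * l = 0)
    (h₂ : K2H l g D d a + 4 * KH2 l g + 4 * l = 0) :
    11 * l ^ 2 - 974 * l - 28 * (D * d) - 11 * D - 192 * a + 9447 = 0 := by
  unfold KH2 K2H K3 at *
  linear_combination 11 * h₁ - 61 * h₂

end

/-- Exclusion of del Pezzo varieties and quadric fibrations over a curve in the proof of
Theorem 2.3. -/
theorem no_delPezzo_no_quadric_fibration (l g D d a : ℤ) (h : Gamma174 l g D d a) :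
    ¬ (KH2 l g + 2 * l = 0 ∧ K2H l g D d a + 2 * KH2 l g = 0 ∧
        K3 l g D d a + 2 * K2H l g D d a = 0) ∧
    ¬ (K3 l g D d a + 6 * K2H l g D d a + 12 * KH2 l g + 8 * l = 0 ∧
        K2H l g D d a + 4 * KH2 l g + 4 * l = 0) := by
  obtain ⟨⟨hl3, hl27, -, -, hd1, -⟩, hd, hci⟩ := h
  rw [add_sub_assoc] at hci
  have hcases := hci.cases_of_le_three (by omega)
  refine ⟨fun ⟨h₁, h₂, _⟩ => ?_, fun ⟨h₁, h₂⟩ => ?_⟩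
  · have h43 := forty_three_mul_eq_of_delPezzo h₁ h₂
    rcases hcases with ⟨_, rfl, rfl⟩ | ⟨_, rfl, rfl⟩ | ⟨_, rfl, rfl⟩ | ⟨_, rfl, rfl⟩ |
      ⟨_, rfl, rfl⟩ | ⟨_, rfl, rfl⟩ | ⟨_, rfl, rfl⟩ <;> omega
  · have hquad := quadratic_eq_of_quadric_fibration h₁ h₂
    rcases hcases with ⟨_, rfl, rfl⟩ | ⟨_, rfl, rfl⟩ | ⟨_, rfl, rfl⟩ | ⟨_, rfl, rfl⟩ |
      ⟨_, rfl, rfl⟩ | ⟨_, rfl, rfl⟩ | ⟨_, rfl, rfl⟩ <;> interval_cases l <;> omega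
end

section
/- The tuples (λ, g, Δ, d, a) ∈ Γ₁₇₄ satisfying the single equation K3 + 6·K2H + 12·KH2 + 8λ = 0 are exactly the two tuples (10, 6, 8, 2, 3) and (12, 11, 8, 2, 3). -/
/-!
Every factor `eᵢ` is at least `2`, so their sum `a + 5 - d` is at least `2a`; hence
`a ≤ 5 - d ≤ 3` and only seven triples `(Δ, d, a)` remain. The equation reduces to
`λ² - 327λ + 122g + 3Δd - Δ - 84a + 2650 = 0`, which is linear in `g`; for `3 ≤ λ ≤ 27`
and `g ≥ 0` the inequality `-21λ + 6g - Δd + 237 ≥ 0` leaves three solutions, and the quadratic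
admissibility inequality excludes `(17, 22, 4, 2, 1)`.
-/

lemma K3_add_six_K2H_add_twelve_KH2_add_eight_mul (l g D d a : ℤ) :
    K3 l g D d a + 6 * K2H l g D d a + 12 * KH2 l g + 8 * l =
      l ^ 2 - 327 * l + 122 * g + 3 * (D * d) - D - 84 * a + 2650 := by
  simp only [K3, K2H, KH2]
  ring

lemma CIFactor.two_mul_le {D s a : ℤ} (h : CIFactor D s a) : 2 * a ≤ s := by
  obtain ⟨e, rfl, he, -, rfl⟩ := h
  have := List.card_nsmul_le_sum e 2 he
  rw [nsmul_eq_mul] at this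
  linarith

def ciTypes : List (ℤ × ℤ × ℤ) :=
  [(1, 5, 0), (4, 2, 1), (3, 3, 1), (2, 4, 1), (6, 2, 2), (4, 3, 2), (8, 2, 3)]

lemma CIFactor.mem_ciTypes {D d a : ℤ} (hd : 2 ≤ d) (h : CIFactor D (a + 5 - d) a) :
    (D, d, a) ∈ ciTypes := by
  have hsum := h.two_mul_le
  obtain ⟨e, hlen, he, rfl, hs⟩ := h
  simp only [ciTypes, List.mem_cons, List.not_mem_nil, Prod.mk.injEq, or_false]
  rcases e with _ | ⟨x, _ | ⟨y, _ | ⟨z, _ | ⟨w, t⟩⟩⟩⟩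
  · simp only [List.length_nil, List.sum_nil, Nat.cast_zero] at hlen hs
    obtain ⟨rfl, rfl⟩ : a = 0 ∧ d = 5 := by omega
    simp
  · simp only [List.length_singleton, List.sum_singleton, List.prod_singleton,
      Nat.cast_one] at hlen hs ⊢
    omega
  · have hx := he x (by simp)
    have hy := he y (by simp)
    simp only [List.length_cons, List.length_nil, List.sum_cons, List.sum_nil, List.prod_cons,
      List.prod_nil] at hlen hs ⊢
    push_cast at hlen
    have hx₃ : x ≤ 3 := by omega
    have hy₃ : y ≤ 3 := by omega
    interval_cases x <;> interval_cases y <;> omega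
  · have hx := he x (by simp)
    have hy := he y (by simp)
    have hz := he z (by simp)
    simp only [List.length_cons, List.length_nil, List.sum_cons, List.sum_nil, List.prod_cons,
      List.prod_nil] at hlen hs ⊢
    push_cast at hlen
    obtain ⟨rfl, rfl, rfl⟩ : x = 2 ∧ y = 2 ∧ z = 2 := by omega
    omega
  · simp only [List.length_cons] at hlen
    push_cast at hlen
    omega

lemma scroll_equation_solutions {l g D d a : ℤ}
    (hDda : (D, d, a) ∈ ciTypes)
    (hl₀ : 3 ≤ l) (hl₁ : l ≤ 27) (hg : 0 ≤ g) (hlin : 0 ≤ -21 * l + 6 * g - D * d + 237)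
    (hquad : 0 ≤ 49 * l ^ 2 - 28 * l * g + 4 * g ^ 2 + (D * d - 1106) * l + 316 * g -
      27 * (D * d) + 6241)
    (heq : l ^ 2 - 327 * l + 122 * g + 3 * (D * d) - D - 84 * a + 2650 = 0) :
    (l, g, D, d, a) = (10, 6, 8, 2, 3) ∨ (l, g, D, d, a) = (12, 11, 8, 2, 3) := by
  have hcand : (l, g, D, d, a) = (17, 22, 4, 2, 1) ∨ (l, g, D, d, a) = (10, 6, 8, 2, 3) ∨
      (l, g, D, d, a) = (12, 11, 8, 2, 3) := by
    simp only [ciTypes, List.mem_cons, List.not_mem_nil, Prod.mk.injEq, or_false] at hDda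
    simp only [Prod.mk.injEq]
    rw [sq] at heq
    rcases hDda with ⟨rfl, rfl, rfl⟩ | ⟨rfl, rfl, rfl⟩ | ⟨rfl, rfl, rfl⟩ | ⟨rfl, rfl, rfl⟩ |
      ⟨rfl, rfl, rfl⟩ | ⟨rfl, rfl, rfl⟩ | ⟨rfl, rfl, rfl⟩ <;>
    interval_cases l <;> omega
  rcases hcand with h | h | h
  · simp only [Prod.mk.injEq] at h
    obtain ⟨rfl, rfl, rfl, rfl, rfl⟩ := h
    norm_num at hquad
  · exact Or.inl h
  · exact Or.inr h

/-- The scroll-over-a-surface equation `(K_B + 2H_B)³ = 0` in the proof of Theorem 2.3 has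
exactly the two solutions `(10, 6, 8, 2, 3)` and `(12, 11, 8, 2, 3)` in Γ₁₇₄. -/
theorem scroll_over_surface_solutions (l g D d a : ℤ) :
    (Gamma174 l g D d a ∧
      K3 l g D d a + 6 * K2H l g D d a + 12 * KH2 l g + 8 * l = 0)
    ↔ ((l, g, D, d, a) = (10, 6, 8, 2, 3) ∨ (l, g, D, d, a) = (12, 11, 8, 2, 3)) := by
  rw [K3_add_six_K2H_add_twelve_KH2_add_eight_mul]
  constructor
  · rintro ⟨⟨⟨hl₀, hl₁, hg, -, hd, -, -, -, -, -, -, -, -, -, hlin, -, hquad, -⟩, hd₁, hci⟩,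
      heq⟩
    exact scroll_equation_solutions (hci.mem_ciTypes (by omega)) hl₀ hl₁ hg hlin hquad heq
  · rintro (h | h) <;>
    · simp only [Prod.mk.injEq] at h
      obtain ⟨rfl, rfl, rfl, rfl, rfl⟩ := h
      exact ⟨⟨by norm_num [Admissible], by norm_num, [2, 2, 2], by norm_num⟩, by norm_num⟩
end

section
/- The 6-tuples (λ, g, ν, Δ, d, a) ∈ ℤ⁶ such that (λ, g, Δ, d, a) ∈ Γ₁₇₄, ν ≥ 0, the Le Barz bound holds, d₃ = 0, d₂ = 0, and d₁ − 1 ≥ 0, are exactly the two tuples (12, 10, 0, 3, 3, 1) and (12, 10, 1, 2, 4, 1). -/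
/-- The Le Barz quadrisecant bound on the number ν of exceptional divisors. -/
def LeBarz (l g ν D d a : ℤ) : Prop :=
  8 * ν ≤ l ^ 4 - 4 * l ^ 2 * (D * d) + 4 * D ^ 2 * d ^ 2 + 6 * l ^ 3 - 24 * l ^ 2 * g
    + 4 * l * (D * d) + 40 * g * (D * d) + 24 * l ^ 2 * a - 48 * (D * d) * a
    - 433 * l ^ 2 + 160 * l * g + 104 * g ^ 2 + 100 * (D * d) - 56 * l * a
    - 240 * g * a + 144 * a ^ 2 + 5650 * l - 784 * g - 168 * a - 23752

theorem CIFactor.cases {D d a : ℤ} (hd : 2 ≤ d) (h : CIFactor D (a + 5 - d) a) :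
    (d = 5 ∧ D = 1 ∧ a = 0) ∨ (d = 4 ∧ D = 2 ∧ a = 1) ∨ (d = 3 ∧ D = 3 ∧ a = 1) ∨
      (d = 3 ∧ D = 4 ∧ a = 2) ∨ (d = 2 ∧ D = 4 ∧ a = 1) ∨ (d = 2 ∧ D = 6 ∧ a = 2) ∨
      (d = 2 ∧ D = 8 ∧ a = 3) := by
  obtain ⟨e, rfl, he, rfl, hsum⟩ := h
  have hlen : e.length • (2 : ℤ) ≤ e.sum := List.card_nsmul_le_sum e 2 he
  rcases e with _ | ⟨x, _ | ⟨y, _ | ⟨z, _ | ⟨w, t⟩⟩⟩⟩ <;>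
    simp only [List.forall_mem_cons, List.length_cons, List.length_nil, List.sum_cons,
      List.sum_nil, List.prod_cons, List.prod_nil, nsmul_eq_mul, Nat.cast_add, Nat.cast_one,
      Nat.cast_zero, and_true] at he hsum hlen ⊢
  · omega
  · omega
  · obtain ⟨rfl, rfl⟩ | ⟨rfl, rfl⟩ | ⟨rfl, rfl⟩ :
        (x = 2 ∧ y = 2) ∨ (x = 2 ∧ y = 3) ∨ (x = 3 ∧ y = 2) := by omega
    all_goals omega
  · obtain ⟨rfl, rfl, rfl⟩ : x = 2 ∧ y = 2 ∧ z = 2 := by omega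
    omega
  · omega

/-- `d₂ + d₃ = 0` reads `80 g = -λ² + 241 λ - Δ d + Δ + 60 a - 2002`; substitute it into
`ν ≥ 0` and `d₁ ≥ 1`, with `ν` taken from `d₂ = 0`. -/
theorem pluridegree_bounds {l g ν D d a : ℤ}
    (h3 : K3 l g D d a + 3 * K2H l g D d a + 3 * KH2 l g + l - ν = 0)
    (h2 : K2H l g D d a + 2 * KH2 l g + l + ν = 0)
    (hν : 0 ≤ ν) (h1 : 0 ≤ KH2 l g + l - ν - 1) :
    l ^ 2 - 69 * l + 706 ≤ 3 * (D * d) + D + 12 * a ∧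
      62 * (D * d) + 18 * D + 120 * a ≤ 18 * l ^ 2 - 978 * l + 9876 := by
  unfold K3 K2H KH2 at *
  constructor <;> linarith

/-- `92` and `328` are the maximum of `3 Δ d + Δ + 12 a` and the minimum of `62 Δ d + 18 Δ + 120 a`
over the seven triples of `CIFactor.cases`. -/
theorem eq_eleven_or_twelve {l : ℤ} (hl : l ≤ 27) (hlo : l ^ 2 - 69 * l + 706 ≤ 92)
    (hhi : 328 ≤ 18 * l ^ 2 - 978 * l + 9876) : l = 11 ∨ l = 12 := by
  have : 11 ≤ l := by nlinarith
  have : l ≤ 12 := by nlinarith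
  omega

/-- In the proof of Theorem 2.3, the del Pezzo fibration case: `d₃ = d₂ = 0` and `d₁ ≥ 1`
select exactly `(12, 10, 0, 3, 3, 1)` and `(12, 10, 1, 2, 4, 1)`. -/
theorem delPezzo_fibration_solutions (l g ν D d a : ℤ) :
    (Gamma174 l g D d a ∧ 0 ≤ ν ∧ LeBarz l g ν D d a ∧
      K3 l g D d a + 3 * K2H l g D d a + 3 * KH2 l g + l - ν = 0 ∧
      K2H l g D d a + 2 * KH2 l g + l + ν = 0 ∧
      0 ≤ KH2 l g + l - ν - 1)
    ↔ ((l, g, ν, D, d, a) = (12, 10, 0, 3, 3, 1) ∨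
        (l, g, ν, D, d, a) = (12, 10, 1, 2, 4, 1)) := by
  constructor
  · rintro ⟨⟨hadm, hd1, hci⟩, hν, -, h3, h2, h1⟩
    obtain ⟨-, hl, -, -, hd_pos, -⟩ := hadm
    have hd : 2 ≤ d := by omega
    obtain ⟨hlo, hhi⟩ := pluridegree_bounds h3 h2 hν h1
    simp only [K3, K2H, KH2] at h3 h2 h1
    simp only [Prod.mk.injEq]
    rcases hci.cases hd with ⟨rfl, rfl, rfl⟩ | ⟨rfl, rfl, rfl⟩ | ⟨rfl, rfl, rfl⟩ |
        ⟨rfl, rfl, rfl⟩ | ⟨rfl, rfl, rfl⟩ | ⟨rfl, rfl, rfl⟩ | ⟨rfl, rfl, rfl⟩ <;>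
      rcases eq_eleven_or_twelve hl (by linarith) (by linarith) with rfl | rfl <;>
      omega
  · rintro (h | h) <;> simp only [Prod.mk.injEq] at h <;>
      obtain ⟨rfl, rfl, rfl, rfl, rfl, rfl⟩ := h
    · exact ⟨⟨by unfold Admissible; decide, by decide, [3], by decide⟩,
        by unfold LeBarz K3 K2H KH2; decide⟩
    · exact ⟨⟨by unfold Admissible; decide, by decide, [2], by decide⟩,
        by unfold LeBarz K3 K2H KH2; decide⟩
end

section
/- Let λ, g, Δ, d, a ∈ ℚ and ε ∈ {0, 1}. Suppose x₁, x₂, x₃, y₁, y₂, s₁, s₂, s₃, χ₀ ∈ ℚ satisfy the nine equations: (1) x₁ = 2(g − 1 − λ); (2) x₃ = y₂ + 7y₁ − 48χ₀ + λ² − 35λ − 21x₁ − 7x₂; (3) −x₁ = 7λ + s₁; (4) y₁ = 21λ + 7s₁ + s₂; (5) y₂ = 35λ + 21s₁ + 7s₂ + s₃; (6) Δ = −540λ − 135s₁ − 18s₂ − s₃ + 729; (7) Δd = −90λ − 15s₁ − s₂ + 243; (8) (4/3)λ − x₁ + (x₂ + y₁)/6 + χ₀ = 28 − ε; (9) (9/2)λ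 − (9/4)x₁ + (x₂ + y₁)/4 + χ₀ = 77 − a. Then: x₁ = −2λ + 2g − 2; x₂ = −39λ + 14g + Δd − 12a + 12ε + 331; x₃ = λ² − 77λ + 14g − 3Δd − Δ − 12a + 60ε + 688; y₁ = −29λ + 16g − Δd + 227; y₂ = 230λ − 102g + 11Δd − Δ − 1842; 81 − 12λ − s₁ = −7λ + 2g + 79; and, setting χ_S = λ/6 + x₁/4 + (x₂ + y₁)/12, c₂S = y₁ + x₁ + λ and K_S² = 12χ_S − c₂S, one has x₁ + λ = −λ + 2g − 2, χ_S = −6λ + 3g − a + ε + 46, c₂S = −30λ + 18g − Δd + 225, and K_S² = −42λ + 18g + Δd − 12a + 12ε + 327. -/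
/-!
The system is triangular once it is read in the right order. Equation (1) gives `x₁`; the
normal bundle sequence (3)–(5), combined with the multidegree equations (6)–(7), eliminates the
Segre classes and expresses `y₁` and `y₂` through `λ`, `x₁`, `Δ` and `Δd`; the difference of the
two Hilbert polynomial conditions (8)–(9) determines `x₂ + y₁`, and then either of them `χ₀`.
The double point formula (2) finally yields `x₃`.
-/

section NormalBundle

variable {R : Type*} [CommRing R] {l x₁ y₁ y₂ s₁ s₂ s₃ D Dd : R}

theorem secondChern_eq_of_multidegree (h3 : -x₁ = 7 * l + s₁)
    (h4 : y₁ = 21 * l + 7 * s₁ + s₂) (h7 : Dd = -90 * l - 15 * s₁ - s₂ + 243) :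
    y₁ = 8 * x₁ - 13 * l - Dd + 243 := by
  linear_combination h4 + h7 + 8 * h3

theorem thirdChern_eq_of_multidegree (h3 : -x₁ = 7 * l + s₁)
    (h5 : y₂ = 35 * l + 21 * s₁ + 7 * s₂ + s₃)
    (h6 : D = -540 * l - 135 * s₁ - 18 * s₂ - s₃ + 729)
    (h7 : Dd = -90 * l - 15 * s₁ - s₂ + 243) :
    y₂ = 128 * l - 51 * x₁ + 11 * Dd - D - 1944 := by
  linear_combination h5 + h6 - 11 * h7 - 51 * h3

end NormalBundle

section HilbertPolynomial

variable {K : Type*} [Field K] [CharZero K] {l x₁ x₂ y₁ χ₀ a ε : K}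

theorem linearCoeff_eq_of_hilbertPolynomial (h8 : (4 / 3) * l - x₁ + (x₂ + y₁) / 6 + χ₀ = 28 - ε)
    (h9 : (9 / 2) * l - (9 / 4) * x₁ + (x₂ + y₁) / 4 + χ₀ = 77 - a) :
    x₂ + y₁ = 15 * x₁ - 38 * l - 12 * a + 12 * ε + 588 := by
  linear_combination 12 * h9 - 12 * h8

theorem constCoeff_eq_of_hilbertPolynomial (h8 : (4 / 3) * l - x₁ + (x₂ + y₁) / 6 + χ₀ = 28 - ε)
    (h9 : (9 / 2) * l - (9 / 4) * x₁ + (x₂ + y₁) / 4 + χ₀ = 77 - a) :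
    χ₀ = 5 * l - 3 / 2 * x₁ + 2 * a - 3 * ε - 70 := by
  linear_combination 3 * h8 - 2 * h9

end HilbertPolynomial

theorem lemma_numerical_invariants_general (l g D d a ε : ℚ)
    (x₁ x₂ x₃ y₁ y₂ s₁ s₂ s₃ χ₀ : ℚ)
    (h1 : x₁ = 2 * (g - 1 - l))
    (h2 : x₃ = y₂ + 7 * y₁ - 48 * χ₀ + l ^ 2 - 35 * l - 21 * x₁ - 7 * x₂)
    (h3 : -x₁ = 7 * l + s₁)
    (h4 : y₁ = 21 * l + 7 * s₁ + s₂)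
    (h5 : y₂ = 35 * l + 21 * s₁ + 7 * s₂ + s₃)
    (h6 : D = -540 * l - 135 * s₁ - 18 * s₂ - s₃ + 729)
    (h7 : D * d = -90 * l - 15 * s₁ - s₂ + 243)
    (h8 : (4 / 3) * l - x₁ + (x₂ + y₁) / 6 + χ₀ = 28 - ε)
    (h9 : (9 / 2) * l - (9 / 4) * x₁ + (x₂ + y₁) / 4 + χ₀ = 77 - a) :
    x₁ = -2 * l + 2 * g - 2 ∧
    x₂ = -39 * l + 14 * g + D * d - 12 * a + 12 * ε + 331 ∧
    x₃ = l ^ 2 - 77 * l + 14 * g - 3 * (D * d) - D - 12 * a + 60 * ε + 688 ∧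
    y₁ = -29 * l + 16 * g - D * d + 227 ∧
    y₂ = 230 * l - 102 * g + 11 * (D * d) - D - 1842 ∧
    81 - 12 * l - s₁ = -7 * l + 2 * g + 79 ∧
    x₁ + l = -l + 2 * g - 2 ∧
    l / 6 + x₁ / 4 + (x₂ + y₁) / 12 = -6 * l + 3 * g - a + ε + 46 ∧
    y₁ + x₁ + l = -30 * l + 18 * g - D * d + 225 ∧
    12 * (l / 6 + x₁ / 4 + (x₂ + y₁) / 12) - (y₁ + x₁ + l)
      = -42 * l + 18 * g + D * d - 12 * a + 12 * ε + 327 := by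
  have hy₁ := secondChern_eq_of_multidegree h3 h4 h7
  have hy₂ := thirdChern_eq_of_multidegree h3 h5 h6 h7
  have hx₂y₁ := linearCoeff_eq_of_hilbertPolynomial h8 h9
  have hχ₀ := constCoeff_eq_of_hilbertPolynomial h8 h9
  and_intros <;> linarith

/-- The linear-algebra content of Lemma 2.1 of the paper: solving the system of nine linear
equations coming from Riemann–Roch, the double point formula, the normal bundle sequence,
the multidegree formulas, and the Hilbert polynomial conditions, determines all the numerical
invariants of the base locus and of its smooth hyperplane section. -/
theorem lemma_numerical_invariants (l g D d a ε : ℚ) (hε : ε = 0 ∨ ε = 1)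
    (x₁ x₂ x₃ y₁ y₂ s₁ s₂ s₃ χ₀ : ℚ)
    (h1 : x₁ = 2 * (g - 1 - l))
    (h2 : x₃ = y₂ + 7 * y₁ - 48 * χ₀ + l ^ 2 - 35 * l - 21 * x₁ - 7 * x₂)
    (h3 : -x₁ = 7 * l + s₁)
    (h4 : y₁ = 21 * l + 7 * s₁ + s₂)
    (h5 : y₂ = 35 * l + 21 * s₁ + 7 * s₂ + s₃)
    (h6 : D = -540 * l - 135 * s₁ - 18 * s₂ - s₃ + 729)
    (h7 : D * d = -90 * l - 15 * s₁ - s₂ + 243)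
    (h8 : (4 / 3) * l - x₁ + (x₂ + y₁) / 6 + χ₀ = 28 - ε)
    (h9 : (9 / 2) * l - (9 / 4) * x₁ + (x₂ + y₁) / 4 + χ₀ = 77 - a) :
    x₁ = -2 * l + 2 * g - 2 ∧
    x₂ = -39 * l + 14 * g + D * d - 12 * a + 12 * ε + 331 ∧
    x₃ = l ^ 2 - 77 * l + 14 * g - 3 * (D * d) - D - 12 * a + 60 * ε + 688 ∧
    y₁ = -29 * l + 16 * g - D * d + 227 ∧
    y₂ = 230 * l - 102 * g + 11 * (D * d) - D - 1842 ∧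
    81 - 12 * l - s₁ = -7 * l + 2 * g + 79 ∧
    x₁ + l = -l + 2 * g - 2 ∧
    l / 6 + x₁ / 4 + (x₂ + y₁) / 12 = -6 * l + 3 * g - a + ε + 46 ∧
    y₁ + x₁ + l = -30 * l + 18 * g - D * d + 225 ∧
    12 * (l / 6 + x₁ / 4 + (x₂ + y₁) / 12) - (y₁ + x₁ + l)
      = -42 * l + 18 * g + D * d - 12 * a + 12 * ε + 327 :=
  lemma_numerical_invariants_general l g D d a ε x₁ x₂ x₃ y₁ y₂ s₁ s₂ s₃ χ₀ h1 h2 h3 h4 h5 h6 h7 h8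
    h9
end

section
/- The admissible tuples (λ, g, Δ, d, a) ∈ ℤ⁵ with d = 1 and (Δ, a) ∈ {(5, 1), (8, 2), (9, 2), (12, 3), (16, 4)} are exactly the six tuples (15, 21, 16, 1, 4), (15, 20, 16, 1, 4), (14, 17, 16, 1, 4), (13, 14, 16, 1, 4), (15, 19, 12, 1, 3), (18, 28, 9, 1, 2). -/
theorem Admissible.mem_box {l g D d a : ℤ} (h : Admissible l g D d a) :
    l ∈ Finset.Icc 3 27 ∧ g ∈ Finset.Icc 0 55 := by
  obtain ⟨hl₃, hl₂₇, hg₀, -, -, -, -, -, -, -, -, -, -, hg, -⟩ := h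
  simp only [Finset.mem_Icc]
  omega

theorem mem_linear_enumeration_of_admissible_of_mem_box :
    ∀ l ∈ Finset.Icc (3 : ℤ) 27, ∀ g ∈ Finset.Icc (0 : ℤ) 55,
    ∀ p ∈ ([(5,1), (8,2), (9,2), (12,3), (16,4)] : List (ℤ × ℤ)), Admissible l g p.1 1 p.2 →
      (l, g, p.1, 1, p.2) ∈ ([(15,21,16,1,4), (15,20,16,1,4), (14,17,16,1,4), (13,14,16,1,4),
        (15,19,12,1,3), (18,28,9,1,2)] : List (ℤ × ℤ × ℤ × ℤ × ℤ)) := by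
  decide

/-- The enumeration in the proof of Theorem 2.8 of the paper: admissible tuples with `d = 1`
and `(Δ, a)` realizable by a coindex-4 complete intersection. -/
theorem cubo_linear_enumeration (l g D d a : ℤ) :
    (Admissible l g D d a ∧ d = 1 ∧
      (D, a) ∈ ({(5,1), (8,2), (9,2), (12,3), (16,4)} : Set (ℤ × ℤ)))
    ↔ (l, g, D, d, a) ∈
      ({(15,21,16,1,4), (15,20,16,1,4), (14,17,16,1,4), (13,14,16,1,4), (15,19,12,1,3),
        (18,28,9,1,2)} : Set (ℤ × ℤ × ℤ × ℤ × ℤ)) := by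
  constructor
  · rintro ⟨hA, rfl, hDa⟩
    obtain ⟨hl, hg⟩ := hA.mem_box
    have hp : (D, a) ∈ ([(5,1), (8,2), (9,2), (12,3), (16,4)] : List (ℤ × ℤ)) := by
      simpa using hDa
    simpa using mem_linear_enumeration_of_admissible_of_mem_box l hl g hg (D, a) hp hA
  · intro h
    simp only [Set.mem_insert_iff, Set.mem_singleton_iff, Prod.mk.injEq] at h
    rcases h with ⟨rfl, rfl, rfl, rfl, rfl⟩ | ⟨rfl, rfl, rfl, rfl, rfl⟩ | ⟨rfl, rfl, rfl, rfl, rfl⟩ |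
      ⟨rfl, rfl, rfl, rfl, rfl⟩ | ⟨rfl, rfl, rfl, rfl, rfl⟩ | ⟨rfl, rfl, rfl, rfl, rfl⟩ <;>
      exact ⟨by decide, rfl, by simp⟩
end
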